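/- For all integers 1 ≤ m ≤ n, the probability ν(n,m) that a uniformly random σ ∈ S_n has no cycle of length greater than m satisfies ν(n,m) ≤ e^{−u log u + u − 1}, where u = n/m. -/

import Mathlib

open Finset

/-- The number of cycles of length `j` in the permutation `σ` of `{1,…,n}`
(fixed points count as cycles of length 1): the number of points whose
orbit under `σ` has size `j`, divided by `j`. -/
noncomputable def cycleCount {n : ℕ} (σ : Equiv.Perm (Fin n)) (j : ℕ) : ℕ :=
  (Finset.univ.filter fun x => Function.minimalPeriod (⇑σ) x = j).card / j

/-- The number of cycles of `σ` whose length lies in the set `I`. -/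
noncomputable def cycleCountIn {n : ℕ} (σ : Equiv.Perm (Fin n)) (I : Finset ℕ) : ℕ :=
  ∑ j ∈ I, cycleCount σ j

/-- The total number of cycles of `σ` (fixed points included as 1-cycles). -/
noncomputable def totalCycles {n : ℕ} (σ : Equiv.Perm (Fin n)) : ℕ :=
  cycleCountIn σ (Finset.Icc 1 n)

/-- Probability of an event under a uniformly random permutation of `{1,…,n}`. -/
noncomputable def permP (n : ℕ) (E : Equiv.Perm (Fin n) → Prop) : ℝ :=
  (Nat.card {σ : Equiv.Perm (Fin n) // E σ} : ℝ) / n.factorial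

/-- Expectation of `f` under a uniformly random permutation of `{1,…,n}`. -/
noncomputable def permE (n : ℕ) (f : Equiv.Perm (Fin n) → ℝ) : ℝ :=
  (∑ σ : Equiv.Perm (Fin n), f σ) / n.factorial

/-- `H(I) = ∑_{j ∈ I} 1/j`. -/
noncomputable def Hset (I : Finset ℕ) : ℝ := ∑ j ∈ I, (1 : ℝ) / j

/-- The harmonic sum `H_n = ∑_{i=1}^n 1/i`. -/
noncomputable def harm (n : ℕ) : ℝ := Hset (Finset.Icc 1 n)


/-!
Write `ν(n)` for the probability that a random permutation of `n` points has no cycle longer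
than `m`. Count the pairs `(σ, x)` with `σ` such a permutation according to the length `j` of
the cycle through `x`: enumerating that cycle from `x` on gives an injection `Fin j ↪ Fin n`,
and `σ` is recovered from it together with a permutation of the remaining `n - j` points having
no cycle longer than `m`. Hence `n ν(n) = ∑_{j=1}^m ν(n - j)` for `n ≥ m`. With
`F(u) = e^{-u log u + u - 1}` and `u = n / m`, the trivial bound `ν ≤ 1` gives
`ν(n) ≤ 1 / u ≤ F(u)` for `u ≤ e`; for `u > e`, strong induction and the antitonicity of `F` on
`[1, ∞)` give `ν(n) ≤ F(u - 1) / u`, and `F(u - 1) ≤ u F(u)` for `u ≥ 2`.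
-/

open Equiv Equiv.Perm Function

theorem Function.Semiconj.minimalPeriod_eq {α β : Type*} {fa : α → α} {fb : β → β} {e : α → β}
    (h : Semiconj e fa fb) (he : Injective e) (x : α) :
    minimalPeriod fb (e x) = minimalPeriod fa x := by
  rw [minimalPeriod_eq_minimalPeriod_iff]
  intro n
  rw [IsPeriodicPt, IsFixedPt, IsPeriodicPt, IsFixedPt, ← (h.iterate_right n).eq x, he.eq_iff]

open Fin.NatCast in
theorem iterate_finRotate {j : ℕ} [NeZero j] (t : ℕ) (k : Fin j) :
    (finRotate j)^[t] k = k + t := by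
  induction t with
  | zero => simp
  | succ t ih => rw [iterate_succ_apply', ih, finRotate_apply, Nat.cast_succ, add_assoc]

theorem minimalPeriod_finRotate {j : ℕ} (k : Fin j) : minimalPeriod (finRotate j) k = j := by
  have := k.neZero
  rw [← Nat.dvd_right_iff_eq]
  intro t
  rw [← isPeriodicPt_iff_minimalPeriod_dvd, IsPeriodicPt, IsFixedPt, iterate_finRotate,
    add_eq_left, Fin.natCast_eq_zero]

namespace Equiv.Perm

variable {α : Type*}

theorem minimalPeriod_pos [Finite α] (σ : Perm α) (x : α) : 0 < minimalPeriod σ x :=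
  minimalPeriod_pos_of_mem_periodicPts (σ.injective.mem_periodicPts x)

theorem minimalPeriod_subtypePerm {p : α → Prop} (σ : Perm α) (h : ∀ x, p (σ x) ↔ p x)
    (x : Subtype p) : minimalPeriod (σ.subtypePerm h) x = minimalPeriod σ x :=
  ((show Semiconj Subtype.val (σ.subtypePerm h) σ from fun _ => rfl).minimalPeriod_eq
    Subtype.val_injective x).symm

theorem minimalPeriod_permCongr {β : Type*} (e : α ≃ β) (σ : Perm α) (x : α) :
    minimalPeriod (e.permCongr σ) (e x) = minimalPeriod σ x :=
  (show Semiconj e σ (e.permCongr σ) from fun _ => by simp).minimalPeriod_eq e.injective x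

theorem minimalPeriod_le_card_filter [Fintype α] (σ : Perm α) (x : α) :
    minimalPeriod σ x ≤ #{y | minimalPeriod σ y = minimalPeriod σ x} := by
  calc minimalPeriod σ x = #(range (minimalPeriod σ x)) := (card_range _).symm
    _ ≤ _ := card_le_card_of_injOn (fun k => σ^[k] x)
        (fun k _ => by simp [minimalPeriod_apply_iterate (σ.injective.mem_periodicPts x)])
        (fun k hk l hl hkl => iterate_injOn_Iio_minimalPeriod (by simpa using hk)
          (by simpa using hl) hkl)

def cycleEmbedding (σ : Perm α) {x : α} {j : ℕ} (hx : minimalPeriod σ x = j) : Fin j ↪ α :=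
  ⟨fun k => σ^[k] x, fun k l hkl => Fin.ext <|
    iterate_injOn_Iio_minimalPeriod (hx ▸ k.isLt : (k : ℕ) < _) (hx ▸ l.isLt : (l : ℕ) < _) hkl⟩

open Fin.NatCast in
theorem cycleEmbedding_finRotate (σ : Perm α) {x : α} {j : ℕ} [NeZero j]
    (hx : minimalPeriod σ x = j) (k : Fin j) :
    cycleEmbedding σ hx (finRotate j k) = σ (cycleEmbedding σ hx k) := by
  have hk : finRotate j k = ((k + 1 : ℕ) : Fin j) := by
    rw [finRotate_apply, Nat.cast_succ, Fin.cast_val_eq_self]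
  have hmod := iterate_mod_minimalPeriod_eq (f := σ) (x := x) (n := k + 1)
  rw [hx] at hmod
  show σ^[(finRotate j k : ℕ)] x = σ (σ^[k] x)
  rw [hk, Fin.val_natCast, hmod, iterate_succ_apply']

def minimalPeriodEqEquiv (σ : Perm α) (j : ℕ) [NeZero j] :
    {x // minimalPeriod σ x = j} ≃ {g : Fin j ↪ α // ∀ k, g (finRotate j k) = σ (g k)} where
  toFun x := ⟨cycleEmbedding σ x.2, cycleEmbedding_finRotate σ x.2⟩
  invFun g := ⟨g.1 0, by
    rw [(show Semiconj g.1 (finRotate j) σ from g.2).minimalPeriod_eq g.1.injective,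
      minimalPeriod_finRotate]⟩
  left_inv x := rfl
  right_inv g := by
    refine Subtype.ext (Embedding.ext fun k => ?_)
    have hk := ((show Semiconj g.1 (finRotate j) σ from g.2).iterate_right k).eq 0
    rw [iterate_finRotate, zero_add, Fin.cast_val_eq_self] at hk
    exact hk.symm

section Extension

variable {p : α → Prop} {σ : Perm α} {c : Perm (Subtype p)}

theorem apply_mem_iff_of_extends (h : ∀ x : Subtype p, σ x = c x) (x : α) : p (σ x) ↔ p x := by
  refine ⟨fun hσx => ?_, fun hx => h ⟨x, hx⟩ ▸ (c _).2⟩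
  obtain ⟨y, hy⟩ := c.surjective ⟨σ x, hσx⟩
  have hyx : σ y = σ x := by rw [h y, hy]
  exact σ.injective hyx ▸ y.2

def extensionsEquiv [DecidablePred p] (c : Perm (Subtype p)) :
    {σ : Perm α // ∀ x : Subtype p, σ x = c x} ≃ Perm {x // ¬p x} where
  toFun σ := σ.1.subtypePerm fun x => not_congr (apply_mem_iff_of_extends σ.2 x)
  invFun τ := ⟨c.subtypeCongr τ, subtypeCongr.left_apply_subtype c τ⟩
  left_inv σ := Subtype.ext <| Equiv.ext fun x => by
    by_cases hx : p x
    · rw [subtypeCongr.left_apply _ _ hx, σ.2 ⟨x, hx⟩]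
    · rw [subtypeCongr.right_apply _ _ hx]; rfl
  right_inv τ := Equiv.ext fun x => by
    simp [subtypeCongr.right_apply_subtype]

theorem minimalPeriod_extensionsEquiv [DecidablePred p] (c : Perm (Subtype p))
    (σ : {σ : Perm α // ∀ x : Subtype p, σ x = c x}) (y : {x // ¬p x}) :
    minimalPeriod (extensionsEquiv c σ) y = minimalPeriod σ.1 y :=
  minimalPeriod_subtypePerm σ.1 (fun x => not_congr (apply_mem_iff_of_extends σ.2 x)) y

end Extension

noncomputable def rangeCycle {j : ℕ} (g : Fin j ↪ α) : Perm (Set.range g) :=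
  (Equiv.ofInjective g g.injective).permCongr (finRotate j)

theorem forall_eq_rangeCycle_iff {j : ℕ} (g : Fin j ↪ α) (σ : Perm α) :
    (∀ x : Set.range g, σ x = rangeCycle g x) ↔ ∀ k, g (finRotate j k) = σ (g k) := by
  rw [← (Equiv.ofInjective g g.injective).forall_congr_right]
  simp [rangeCycle, eq_comm]

variable (α) in
abbrev BoundedCyclePerm (m : ℕ) := {σ : Perm α // ∀ x, minimalPeriod σ x ≤ m}

theorem natCard_boundedCyclePerm_congr (m : ℕ) {β : Type*} (e : α ≃ β) :
    Nat.card (BoundedCyclePerm α m) = Nat.card (BoundedCyclePerm β m) :=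
  Nat.card_congr <| e.permCongr.subtypeEquiv fun σ => by
    rw [← e.forall_congr_right]
    simp only [minimalPeriod_permCongr]

variable [Fintype α] {m : ℕ}

theorem natCard_boundedCyclePerm_semiconj_finRotate {j : ℕ} (g : Fin j ↪ α) (hjm : j ≤ m) :
    Nat.card {σ : BoundedCyclePerm α m // ∀ k, g (finRotate j k) = σ.1 (g k)} =
      Nat.card (BoundedCyclePerm (Fin (Nat.card α - j)) m) := by
  classical
  have hcompl : Nat.card {x // x ∉ Set.range g} = Nat.card α - j := by
    simp only [Nat.card_eq_fintype_card, Fintype.card_subtype_compl,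
      Set.card_range_of_injective g.injective, Fintype.card_fin]
  let e : {σ : Perm α // ∀ k, g (finRotate j k) = σ (g k)} ≃ Perm {x // x ∉ Set.range g} :=
    (subtypeEquivRight (forall_eq_rangeCycle_iff g)).symm.trans (extensionsEquiv (rangeCycle g))
  have hbounded (σ : {σ : Perm α // ∀ k, g (finRotate j k) = σ (g k)}) :
      (∀ x, minimalPeriod σ.1 x ≤ m) ↔ ∀ y, minimalPeriod (e σ) y ≤ m := by
    have hrange (k : Fin j) : minimalPeriod σ.1 (g k) = j := by
      rw [(show Semiconj g (finRotate j) σ.1 from σ.2).minimalPeriod_eq g.injective,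
        minimalPeriod_finRotate]
    have hoff (y : {x // x ∉ Set.range g}) : minimalPeriod (e σ) y = minimalPeriod σ.1 y :=
      minimalPeriod_extensionsEquiv _ _ y
    refine ⟨fun h y => (hoff y).trans_le (h y), fun h x => ?_⟩
    by_cases hx : x ∈ Set.range g
    · obtain ⟨k, rfl⟩ := hx
      exact (hrange k).trans_le hjm
    · exact (hoff ⟨x, hx⟩).symm.trans_le (h ⟨x, hx⟩)
  calc _ = Nat.card {σ : {σ : Perm α // ∀ k, g (finRotate j k) = σ (g k)} //
          ∀ x, minimalPeriod σ.1 x ≤ m} :=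
        Nat.card_congr <| (subtypeSubtypeEquivSubtypeInter
          (fun σ : Perm α => ∀ x, minimalPeriod σ x ≤ m)
          (fun σ => ∀ k, g (finRotate j k) = σ (g k))).trans <|
          (subtypeEquivRight fun _ => and_comm).trans (subtypeSubtypeEquivSubtypeInter _ _).symm
    _ = Nat.card {τ : Perm {x // x ∉ Set.range g} // ∀ y, minimalPeriod τ y ≤ m} :=
        Nat.card_congr (e.subtypeEquiv hbounded)
    _ = _ := natCard_boundedCyclePerm_congr m ((Finite.equivFin _).trans (finCongr hcompl))

theorem natCard_boundedCyclePerm_prod_minimalPeriod_eq {j : ℕ} [NeZero j] (hjm : j ≤ m) :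
    Nat.card {q : BoundedCyclePerm α m × α // minimalPeriod q.1.1 q.2 = j} =
      (Nat.card α).descFactorial j * Nat.card (BoundedCyclePerm (Fin (Nat.card α - j)) m) := by
  classical
  calc _ = Nat.card (Σ σ : BoundedCyclePerm α m, {x // minimalPeriod σ.1 x = j}) :=
        Nat.card_congr (subtypeProdEquivSigmaSubtype _)
    _ = Nat.card (Σ σ : BoundedCyclePerm α m,
          {g : Fin j ↪ α // ∀ k, g (finRotate j k) = σ.1 (g k)}) :=
        Nat.card_congr (Equiv.sigmaCongrRight fun σ : BoundedCyclePerm α m => minimalPeriodEqEquiv σ.1 j)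
    _ = Nat.card (Σ g : Fin j ↪ α,
          {σ : BoundedCyclePerm α m // ∀ k, g (finRotate j k) = σ.1 (g k)}) :=
        Nat.card_congr <| (subtypeProdEquivSigmaSubtype _).symm.trans <|
          ((prodComm _ _).subtypeEquiv fun _ => Iff.rfl).trans (subtypeProdEquivSigmaSubtype
            fun (g : Fin j ↪ α) (σ : BoundedCyclePerm α m) => ∀ k, g (finRotate j k) = σ.1 (g k))
    _ = ∑ _g : Fin j ↪ α, Nat.card (BoundedCyclePerm (Fin (Nat.card α - j)) m) := by
        rw [Nat.card_sigma]
        exact sum_congr rfl fun g _ => natCard_boundedCyclePerm_semiconj_finRotate g hjm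
    _ = _ := by
        rw [sum_const, card_univ, Fintype.card_embedding_eq, Fintype.card_fin,
          Nat.card_eq_fintype_card (α := α), smul_eq_mul]

variable (m) in
theorem natCard_mul_natCard_boundedCyclePerm :
    Nat.card α * Nat.card (BoundedCyclePerm α m) =
      ∑ j ∈ Icc 1 m,
        (Nat.card α).descFactorial j * Nat.card (BoundedCyclePerm (Fin (Nat.card α - j)) m) := by
  classical
  rw [mul_comm, ← Nat.card_prod, Nat.card_eq_fintype_card, ← card_univ,
    card_eq_sum_card_fiberwise (t := Icc 1 m)
      (f := fun q : BoundedCyclePerm α m × α => minimalPeriod q.1.1 q.2)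
      fun q _ => mem_Icc.2 ⟨minimalPeriod_pos q.1.1 q.2, q.1.2 q.2⟩]
  refine sum_congr rfl fun j hj => ?_
  have : NeZero j := ⟨by grind⟩
  rw [← natCard_boundedCyclePerm_prod_minimalPeriod_eq (mem_Icc.1 hj).2,
    Nat.card_eq_fintype_card, Fintype.card_subtype]

end Equiv.Perm

theorem cycleCount_eq_zero_iff {n j : ℕ} (σ : Perm (Fin n)) (hj : 0 < j) :
    cycleCount σ j = 0 ↔ ∀ x, minimalPeriod σ x ≠ j := by
  rw [cycleCount, Nat.div_eq_zero_iff_lt hj]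
  refine ⟨fun h x hx => ?_, fun h => ?_⟩
  · have := σ.minimalPeriod_le_card_filter x
    rw [hx] at this
    omega
  · rwa [filter_false_of_mem fun x _ => h x, card_empty]

theorem cycleCountIn_Icc_eq_zero_iff {n m : ℕ} (σ : Perm (Fin n)) :
    cycleCountIn σ (Icc (m + 1) n) = 0 ↔ ∀ x, minimalPeriod σ x ≤ m := by
  simp only [cycleCountIn, sum_eq_zero_iff, mem_Icc]
  refine ⟨fun h x => ?_, fun h j hj => (cycleCount_eq_zero_iff σ (by omega)).2 fun x hx => ?_⟩
  · by_contra! hx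
    have hle : minimalPeriod σ x ≤ n := (Fintype.card_fin n).le.trans' minimalPeriod_le_card
    exact (cycleCount_eq_zero_iff σ (by omega)).1 (h _ ⟨hx, hle⟩) x rfl
  · have := h x
    omega

theorem permP_le_one (n : ℕ) (E : Perm (Fin n) → Prop) : permP n E ≤ 1 := by
  have hle := Finite.card_subtype_le E
  rw [Nat.card_perm, Nat.card_fin] at hle
  rw [permP, div_le_one (by positivity)]
  exact_mod_cast hle

theorem permP_forall_minimalPeriod_le_eq_sum {n m : ℕ} (hm : 1 ≤ m) (hmn : m ≤ n) :
    permP n (fun σ => ∀ x, minimalPeriod σ x ≤ m) =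
      (∑ j ∈ Icc 1 m, permP (n - j) (fun σ => ∀ x, minimalPeriod σ x ≤ m)) / n := by
  have hrec := natCard_mul_natCard_boundedCyclePerm (α := Fin n) m
  rw [Nat.card_fin] at hrec
  have hterm (j : ℕ) (hj : j ∈ Icc 1 m) : permP (n - j) (fun σ => ∀ x, minimalPeriod σ x ≤ m) =
      (n.descFactorial j * Nat.card (BoundedCyclePerm (Fin (n - j)) m) : ℝ) / n.factorial := by
    have hjn : j ≤ n := (mem_Icc.1 hj).2.trans hmn
    have hdesc : (n.descFactorial j : ℝ) ≠ 0 := by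
      exact_mod_cast Nat.descFactorial_eq_zero_iff_lt.not.2 (not_lt.2 hjn)
    rw [permP, ← Nat.factorial_mul_descFactorial hjn, Nat.cast_mul,
      mul_comm (n.descFactorial j : ℝ), mul_div_mul_right _ _ hdesc]
  have hn : (n : ℝ) ≠ 0 := by exact_mod_cast (by omega : n ≠ 0)
  rw [sum_congr rfl hterm, ← sum_div, eq_div_iff hn, permP, div_mul_eq_mul_div, mul_comm]
  exact_mod_cast congrArg (fun k : ℕ => (k : ℝ) / n.factorial) hrec

noncomputable def noLargeCycleBound (u : ℝ) : ℝ := Real.exp (-(u * Real.log u) + u - 1)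

theorem noLargeCycleBound_le_of_le {v w : ℝ} (hw : 1 ≤ w) (hwv : w ≤ v) :
    noLargeCycleBound v ≤ noLargeCycleBound w := by
  have hw0 : 0 < w := by linarith
  have hv0 : 0 < v := by linarith
  have hlog : 1 - w / v ≤ Real.log v - Real.log w := by
    rw [← Real.log_div hv0.ne' hw0.ne', ← inv_div]
    exact Real.one_sub_inv_le_log_of_pos (by positivity)
  have hv : v * (1 - w / v) = v - w := by field_simp
  apply Real.exp_le_exp.2
  nlinarith [mul_le_mul_of_nonneg_left hlog hv0.le,
    mul_nonneg (sub_nonneg.2 hwv) (Real.log_nonneg hw)]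

theorem inv_le_noLargeCycleBound {u : ℝ} (h1 : 1 ≤ u) (he : u ≤ Real.exp 1) :
    u⁻¹ ≤ noLargeCycleBound u := by
  have hu0 : 0 < u := by linarith
  have hlog : Real.log u ≤ 1 := (Real.log_le_iff_le_exp hu0).2 he
  rw [← Real.exp_log hu0, ← Real.exp_neg, Real.exp_log hu0]
  apply Real.exp_le_exp.2
  nlinarith [Real.log_nonneg h1]

theorem noLargeCycleBound_sub_one_div_le {u : ℝ} (h : 2 ≤ u) :
    noLargeCycleBound (u - 1) / u ≤ noLargeCycleBound u := by
  have hu0 : 0 < u := by linarith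
  have hu1 : 0 < u - 1 := by linarith
  have hlog : (u - 1) * (Real.log u - Real.log (u - 1)) ≤ 1 := by
    have hd := Real.log_le_sub_one_of_pos (div_pos hu0 hu1)
    rw [Real.log_div hu0.ne' hu1.ne'] at hd
    have : (u - 1) * (u / (u - 1) - 1) = 1 := by field_simp; ring
    nlinarith
  rw [div_le_iff₀ hu0, noLargeCycleBound, noLargeCycleBound, ← Real.exp_log hu0, ← Real.exp_add,
    Real.exp_log hu0]
  apply Real.exp_le_exp.2
  nlinarith

theorem le_noLargeCycleBound_of_eq_sum {f : ℕ → ℝ} {m : ℕ} (hm : 1 ≤ m) (hf : ∀ k, f k ≤ 1)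
    (hrec : ∀ n, m ≤ n → f n = (∑ j ∈ Icc 1 m, f (n - j)) / n) :
    ∀ n, m ≤ n → f n ≤ noLargeCycleBound (n / m) := by
  intro n
  induction n using Nat.strong_induction_on with
  | _ n ih =>
  intro hmn
  have hm0 : (0 : ℝ) < m := by exact_mod_cast hm
  have hn0 : (0 : ℝ) < n := by exact_mod_cast hm.trans hmn
  have hu1 : 1 ≤ (n : ℝ) / m := by rw [le_div_iff₀ hm0, one_mul]; exact_mod_cast hmn
  have hcard : (#(Icc 1 m) : ℝ) = m := by simp
  rw [hrec n hmn, div_le_iff₀ hn0]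
  rcases le_or_gt ((n : ℝ) / m) (Real.exp 1) with hue | hue
  · calc ∑ j ∈ Icc 1 m, f (n - j) ≤ #(Icc 1 m) • (1 : ℝ) :=
          sum_le_card_nsmul _ _ _ fun j _ => hf _
      _ = ((n : ℝ) / m)⁻¹ * n := by rw [nsmul_one, hcard]; field_simp
      _ ≤ noLargeCycleBound (n / m) * n :=
        mul_le_mul_of_nonneg_right (inv_le_noLargeCycleBound hu1 hue) hn0.le
  · have hu2 : 2 ≤ (n : ℝ) / m := by linarith [Real.add_one_le_exp 1]
    have h2m : 2 * m ≤ n := by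
      have : (2 * m : ℝ) ≤ n := by rwa [le_div_iff₀ hm0] at hu2
      exact_mod_cast this
    have hterm (j : ℕ) (hj : j ∈ Icc 1 m) : f (n - j) ≤ noLargeCycleBound ((n : ℝ) / m - 1) := by
      obtain ⟨hj1, hjm⟩ := mem_Icc.1 hj
      refine (ih (n - j) (by omega) (by omega)).trans (noLargeCycleBound_le_of_le (by linarith) ?_)
      rw [Nat.cast_sub (by omega), sub_div]
      exact sub_le_sub_left (div_le_one_of_le₀ (by exact_mod_cast hjm) hm0.le) _
    calc ∑ j ∈ Icc 1 m, f (n - j) ≤ #(Icc 1 m) • noLargeCycleBound ((n : ℝ) / m - 1) :=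
          sum_le_card_nsmul _ _ _ hterm
      _ = noLargeCycleBound ((n : ℝ) / m - 1) / ((n : ℝ) / m) * n := by
          rw [nsmul_eq_mul, hcard]; field_simp
      _ ≤ noLargeCycleBound (n / m) * n :=
        mul_le_mul_of_nonneg_right (noLargeCycleBound_sub_one_div_le hu2) hn0.le

/-- **Permutations without large cycles.** For `1 ≤ m ≤ n`, the probability
that a random `σ ∈ Sₙ` has no cycle of length greater than `m` is at most
`e^{-u log u + u - 1}`, where `u = n/m`. -/
theorem no_large_cycles_bound (n m : ℕ) (hm : 1 ≤ m) (hmn : m ≤ n) :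
    permP n (fun σ => cycleCountIn σ (Finset.Icc (m + 1) n) = 0)
      ≤ Real.exp (-(((n : ℝ) / m) * Real.log ((n : ℝ) / m)) + (n : ℝ) / m - 1) := by
  simp_rw [cycleCountIn_Icc_eq_zero_iff]
  exact le_noLargeCycleBound_of_eq_sum hm (fun k => permP_le_one k _)
    (fun k hk => permP_forall_minimalPeriod_le_eq_sum hm hk) n hmn
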